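/- Let m ≥ 1 and let ζ^-, ζ^+ ∈ ℤ^m with ζ^-_i ≤ ζ^+_i for all i. For each subset I ⊆ {1,…,m} let c_I : ℤ^m → ℂ be arbitrary, and define operators (Dg)(μ) = ∑_I c_I(μ) g(μ + 𝟏_I) and (D^†f)(μ) = ∑_I c_I(μ - 𝟏_I) f(μ - 𝟏_I), where 𝟏_I is the indicator vector of I. Suppose f : ℤ^m → ℂ vanishes at every μ such that for some i either ζ^+_i < μ_i ≤ ζ^+_i + 1 or ζ^-_i - 1 ≤ μ_i < ζ^-_i. Then ∑_{μ ∈ ∏_i [ζ^-_i, ζ^+_i + 1]} (D^†f)(μ) g(μ) = ∑_{μ ∈ ∏_i [ζ^-_i, ζ^+_i]} f(μ) (Dg)(μ) for every g : ℤ^m → ℂ. -/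

import Mathlib

/-! Summation by parts for a single I is the substitution ν = μ - 𝟏_I: it moves the box
∏ [ζ⁻_i, ζ⁺_i + 1] to a box sandwiched between ∏ [ζ⁻_i, ζ⁺_i] and its one-layer thickening, and f
vanishes on that layer. -/

/-- Indicator vector of a subset `I` of indices. -/
def indVec {m : ℕ} (I : Finset (Fin m)) : Fin m → ℤ := fun i => if i ∈ I then 1 else 0

open Finset

theorem Finset.sum_Icc_comp_sub_eq_of_eq_zero {α M : Type*} [AddCommGroup α] [PartialOrder α]
    [IsOrderedAddMonoid α] [LocallyFiniteOrder α] [AddCommMonoid M]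
    {a b v w : α} (hv₀ : 0 ≤ v) (hvw : v ≤ w) {F : α → M}
    (hF : ∀ ν ∈ Icc (a - w) (b + w), ν ∉ Icc a b → F ν = 0) :
    ∑ μ ∈ Icc a (b + w), F (μ - v) = ∑ ν ∈ Icc a b, F ν := by
  have hshift : ∑ μ ∈ Icc a (b + w), F (μ - v) = ∑ ν ∈ Icc (a - v) (b + w - v), F ν :=
    sum_equiv (Equiv.subRight v) (by simp) (fun _ _ => rfl)
  have hsub : Icc a b ⊆ Icc (a - v) (b + w - v) := Icc_subset_Icc (sub_le_self a hv₀)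
    (by rw [add_sub_assoc]; exact le_add_of_nonneg_right (sub_nonneg.2 hvw))
  have hsup : Icc (a - v) (b + w - v) ⊆ Icc (a - w) (b + w) :=
    Icc_subset_Icc (sub_le_sub_left hvw a) (sub_le_self _ hv₀)
  rw [hshift]
  exact (sum_subset hsub fun ν hν hν' => hF ν (hsup hν) hν').symm

lemma exists_boundary_coord_of_notMem_Icc {ι : Type*} [Fintype ι] [DecidableEq ι]
    {a b ν : ι → ℤ} (hν : ν ∈ Icc (a - 1) (b + 1)) (hν' : ν ∉ Icc a b) :
    ∃ i, (b i < ν i ∧ ν i ≤ b i + 1) ∨ (a i - 1 ≤ ν i ∧ ν i < a i) := by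
  simp only [mem_Icc, Pi.le_def, not_and_or, not_forall, not_le] at hν hν'
  obtain ⟨hlo, hhi⟩ := hν
  rcases hν' with ⟨i, hi⟩ | ⟨i, hi⟩
  · exact ⟨i, .inr ⟨hlo i, hi⟩⟩
  · exact ⟨i, .inl ⟨hi, hhi i⟩⟩

lemma indVec_nonneg {m : ℕ} (I : Finset (Fin m)) : 0 ≤ indVec I := fun i => by
  unfold indVec; split_ifs <;> simp

lemma indVec_le_one {m : ℕ} (I : Finset (Fin m)) : indVec I ≤ 1 := fun i => by
  unfold indVec; split_ifs <;> simp

theorem stmt9_general (m : ℕ) (zm zp : Fin m → ℤ)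
    (c : Finset (Fin m) → (Fin m → ℤ) → ℂ) (f g : (Fin m → ℤ) → ℂ)
    (hf : ∀ μ : Fin m → ℤ,
      (∃ i, (zp i < μ i ∧ μ i ≤ zp i + 1) ∨ (zm i - 1 ≤ μ i ∧ μ i < zm i)) → f μ = 0) :
    ∑ μ ∈ Finset.Icc zm (fun i => zp i + 1),
        (∑ I : Finset (Fin m), c I (μ - indVec I) * f (μ - indVec I)) * g μ
      = ∑ μ ∈ Finset.Icc zm zp,
        f μ * ∑ I : Finset (Fin m), c I μ * g (μ + indVec I) := by
  have hshift (I : Finset (Fin m)) :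
      ∑ μ ∈ Icc zm (zp + 1), c I (μ - indVec I) * f (μ - indVec I) * g μ
        = ∑ ν ∈ Icc zm zp, f ν * (c I ν * g (ν + indVec I)) := by
    rw [← sum_Icc_comp_sub_eq_of_eq_zero (F := fun ν => f ν * (c I ν * g (ν + indVec I)))
      (indVec_nonneg I) (indVec_le_one I) fun ν hν hν' => by
        rw [hf ν (exists_boundary_coord_of_notMem_Icc hν hν'), zero_mul]]
    refine sum_congr rfl fun μ _ => ?_
    rw [sub_add_cancel]
    ring
  calc ∑ μ ∈ Icc zm (zp + 1), (∑ I, c I (μ - indVec I) * f (μ - indVec I)) * g μ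
      = ∑ I, ∑ μ ∈ Icc zm (zp + 1), c I (μ - indVec I) * f (μ - indVec I) * g μ := by
        simp_rw [sum_mul]; exact sum_comm
    _ = ∑ I, ∑ ν ∈ Icc zm zp, f ν * (c I ν * g (ν + indVec I)) := sum_congr rfl fun I _ => hshift I
    _ = ∑ ν ∈ Icc zm zp, f ν * ∑ I, c I ν * g (ν + indVec I) := by
        simp_rw [mul_sum]; exact sum_comm

theorem stmt9 (m : ℕ) (hm : 1 ≤ m) (zm zp : Fin m → ℤ) (hz : ∀ i, zm i ≤ zp i)
    (c : Finset (Fin m) → (Fin m → ℤ) → ℂ) (f g : (Fin m → ℤ) → ℂ)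
    (hf : ∀ μ : Fin m → ℤ,
      (∃ i, (zp i < μ i ∧ μ i ≤ zp i + 1) ∨ (zm i - 1 ≤ μ i ∧ μ i < zm i)) → f μ = 0) :
    ∑ μ ∈ Finset.Icc zm (fun i => zp i + 1),
        (∑ I : Finset (Fin m), c I (μ - indVec I) * f (μ - indVec I)) * g μ
      = ∑ μ ∈ Finset.Icc zm zp,
        f μ * ∑ I : Finset (Fin m), c I μ * g (μ + indVec I) :=
  stmt9_general m zm zp c f g hf
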